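/- arXiv:1903.12005 — 4 statements merged into one kernel-verified Lean document; each statement's English description precedes it below -/
import Mathlib

section
/- Let $a:\mathbb{R}\to(0,\infty)$ be continuous and $b$ locally bounded measurable, with $m(x)=\frac{1}{a(x)}e^{2B(x)}$ and $s(x)=e^{-2B(x)}$ where $B(x)=\int_0^x b(t)/a(t)\,dt$. Assume $\int_{\mathbb{R}} m(x)dx<\infty$. Then for any fixed $x\in\mathbb{R}$, the quantity $\int_x^{\infty} m(y)\Big(\int_x^y s(z)\int_{-\infty}^z m(w)\,dw\,dz\Big)dy$ is finite if and only if $\int_0^{\infty} m(x)\Big(\int_0^x s(y)\,dy\Big)dx < \infty$. -/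
/-!
With `M z = ∫_{-∞}^z m`, the function `M` is nondecreasing, positive at `x` and bounded by
`∫ m < ∞`, so on `[x, ∞)` the inner integral `∫_x^y s M` lies between `M x · ∫_x^y s` and
`(∫ m) · ∫_x^y s`; the first integrability condition is therefore equivalent to that of
`m(y) ∫_x^y s`. Moving the base point of `∫ s` from `x` to `0` changes the integrand by a
constant multiple of the integrable `m`, and moving the left end of `Ioi` is harmless for a locally
integrable function.
-/

open MeasureTheory Set Filter intervalIntegral

lemma intervalIntegrable_of_measurable_of_bounded_on_compacts {f : ℝ → ℝ} (hf : Measurable f)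
    (hbd : ∀ K : Set ℝ, IsCompact K → ∃ C, ∀ x ∈ K, |f x| ≤ C) (u v : ℝ) :
    IntervalIntegrable f volume u v := by
  obtain ⟨C, hC⟩ := hbd _ (isCompact_uIcc (a := u) (b := v))
  refine (Measure.integrableOn_of_bounded isCompact_uIcc.measure_lt_top.ne
    hf.aestronglyMeasurable (M := C) ?_).intervalIntegrable
  exact (ae_restrict_iff' measurableSet_uIcc).2 (.of_forall hC)

lemma MeasureTheory.LocallyIntegrable.integrableOn_Ioi_iff {f : ℝ → ℝ} {μ : Measure ℝ}
    [NullSingletonClass μ] (hf : LocallyIntegrable f μ) (a : ℝ) :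
    IntegrableOn f (Ioi a) μ ↔ IntegrableAtFilter f atTop μ := by
  rw [← integrableOn_Ici_iff_integrableOn_Ioi, integrableOn_Ici_iff_integrableAtFilter_atTop]
  exact and_iff_left (hf.locallyIntegrableOn _)

lemma integrableOn_iff_of_mul_le_of_le_mul {α : Type*} [MeasurableSpace α] {μ : Measure α}
    {f g : α → ℝ} {t : Set α} (ht : MeasurableSet t)
    (hf : AEStronglyMeasurable f (μ.restrict t)) (hg : AEStronglyMeasurable g (μ.restrict t))
    {c C : ℝ} (hc : 0 < c) (hg0 : ∀ y ∈ t, 0 ≤ g y) (hlow : ∀ y ∈ t, c * g y ≤ f y)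
    (hup : ∀ y ∈ t, f y ≤ C * g y) :
    IntegrableOn f t μ ↔ IntegrableOn g t μ := by
  refine ⟨fun h => (h.const_mul c⁻¹).mono' hg ?_, fun h => (h.const_mul C).mono' hf ?_⟩
  · refine (ae_restrict_iff' ht).2 (.of_forall fun y hy => ?_)
    rw [Real.norm_of_nonneg (hg0 y hy), le_inv_mul_iff₀ hc]
    exact hlow y hy
  · refine (ae_restrict_iff' ht).2 (.of_forall fun y hy => ?_)
    rw [Real.norm_of_nonneg ((mul_nonneg hc.le (hg0 y hy)).trans (hlow y hy))]
    exact hup y hy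

lemma integral_mul_mem_Icc_mul_integral {s φ : ℝ → ℝ} {x y c C : ℝ} (hxy : x ≤ y)
    (hs : IntervalIntegrable s volume x y)
    (hsφ : IntervalIntegrable (fun z => s z * φ z) volume x y)
    (hs0 : ∀ z ∈ Icc x y, 0 ≤ s z) (hφ : ∀ z ∈ Icc x y, φ z ∈ Icc c C) :
    ∫ z in x..y, s z * φ z ∈ Icc (c * ∫ z in x..y, s z) (C * ∫ z in x..y, s z) := by
  rw [← intervalIntegral.integral_const_mul, ← intervalIntegral.integral_const_mul]
  constructor
  · refine integral_mono_on hxy (hs.const_mul c) hsφ fun z hz => ?_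
    rw [mul_comm]
    exact mul_le_mul_of_nonneg_left (hφ z hz).1 (hs0 z hz)
  · refine integral_mono_on hxy hsφ (hs.const_mul C) fun z hz => ?_
    rw [mul_comm C]
    exact mul_le_mul_of_nonneg_left (hφ z hz).2 (hs0 z hz)

lemma monotone_setIntegral_Iio {m : ℝ → ℝ} (hm : Integrable m) (hm0 : 0 ≤ m) :
    Monotone fun z => ∫ w in Iio z, m w := fun _ _ h =>
  setIntegral_mono_set hm.integrableOn (.of_forall hm0) (Iio_subset_Iio h).eventuallyLE

theorem integrableOn_mul_integral_mul_setIntegral_Iio_iff {m s : ℝ → ℝ} {x : ℝ}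
    (hm : Integrable m) (hm0 : 0 ≤ m) (hmx : 0 < ∫ w in Iio x, m w) (hs : Continuous s)
    (hs0 : 0 ≤ s) :
    IntegrableOn (fun y => m y * ∫ z in x..y, s z * ∫ w in Iio z, m w) (Ioi x)
      ↔ IntegrableOn (fun y => m y * ∫ z in x..y, s z) (Ioi x) := by
  set M := fun z => ∫ w in Iio z, m w
  have hM : Monotone M := monotone_setIntegral_Iio hm hm0
  have hsM (u v : ℝ) : IntervalIntegrable (fun z => s z * M z) volume u v :=
    hM.intervalIntegrable.continuousOn_mul hs.continuousOn
  have hs' (u v : ℝ) : IntervalIntegrable s volume u v := hs.intervalIntegrable u v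
  have hbounds (y : ℝ) (hy : y ∈ Ioi x) :=
    integral_mul_mem_Icc_mul_integral (c := M x) (C := ∫ w, m w) hy.out.le (hs' x y) (hsM x y)
      (fun z _ => hs0 z) fun z hz => ⟨hM hz.1, setIntegral_le_integral hm (.of_forall hm0)⟩
  refine integrableOn_iff_of_mul_le_of_le_mul (C := ∫ w, m w) measurableSet_Ioi
    (hm.aestronglyMeasurable.mul (continuous_primitive hsM x).aestronglyMeasurable).restrict
    (hm.aestronglyMeasurable.mul (continuous_primitive hs' x).aestronglyMeasurable).restrict
    hmx (fun y hy => mul_nonneg (hm0 y) (integral_nonneg hy.out.le fun z _ => hs0 z))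
    (fun y hy => ?_) (fun y hy => ?_)
  · exact (mul_left_comm _ _ _).trans_le (mul_le_mul_of_nonneg_left (hbounds y hy).1 (hm0 y))
  · exact (mul_le_mul_of_nonneg_left (hbounds y hy).2 (hm0 y)).trans_eq (mul_left_comm _ _ _)

theorem integrableOn_mul_integral_iff_of_integrable {m s : ℝ → ℝ} {t : Set ℝ}
    (hm : Integrable m) (hs : ∀ u v, IntervalIntegrable s volume u v) (x x₀ : ℝ) :
    IntegrableOn (fun y => m y * ∫ z in x..y, s z) t
      ↔ IntegrableOn (fun y => m y * ∫ z in x₀..y, s z) t := by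
  have hc : IntegrableOn (fun y => m y * ∫ z in x₀..x, s z) t := (hm.mul_const _).integrableOn
  refine Iff.trans (iff_of_eq ?_) (integrable_add_iff_integrable_left' hc.neg)
  congr 1
  funext y
  rw [Pi.neg_apply, ← integral_interval_sub_left (hs x₀ y) (hs x₀ x)]
  ring

/-- The averaged hitting-time integral from above is finite iff the
entrance-boundary condition at `+∞` holds. -/
theorem stmt1 (a b B m s : ℝ → ℝ) (x : ℝ)
    (ha : Continuous a) (hapos : ∀ x, 0 < a x)
    (hbm : Measurable b)
    (hbloc : ∀ K : Set ℝ, IsCompact K → ∃ C, ∀ x ∈ K, |b x| ≤ C)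
    (hB : ∀ x, B x = ∫ t in (0:ℝ)..x, b t / a t)
    (hm : ∀ x, m x = (a x)⁻¹ * Real.exp (2 * B x))
    (hs : ∀ x, s x = Real.exp (-(2 * B x)))
    (hmint : Integrable m) :
    IntegrableOn (fun y => m y * ∫ z in x..y, s z * ∫ w in Iio z, m w) (Ioi x)
      ↔ IntegrableOn (fun x' => m x' * ∫ y in (0:ℝ)..x', s y) (Ioi 0) := by
  have hba (u v : ℝ) : IntervalIntegrable (fun t => b t / a t) volume u v := by
    simpa only [div_eq_mul_inv, Pi.inv_apply] using
      (intervalIntegrable_of_measurable_of_bounded_on_compacts hbm hbloc u v).mul_continuousOn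
        (ha.inv₀ fun t => (hapos t).ne').continuousOn
  have hBc : Continuous B := funext hB ▸ continuous_primitive hba 0
  have hsc : Continuous s := funext hs ▸ by fun_prop
  have hmpos (y : ℝ) : 0 < m y := hm y ▸ mul_pos (inv_pos.2 (hapos y)) (Real.exp_pos _)
  have hmx : 0 < ∫ w in Iio x, m w := by
    rw [setIntegral_pos_iff_support_of_nonneg_ae (.of_forall fun w => (hmpos w).le)
      hmint.integrableOn, Function.support_eq_univ fun w => (hmpos w).ne', univ_inter]
    simp
  have hH : LocallyIntegrable (fun y => m y * ∫ z in (0:ℝ)..y, s z) :=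
    locallyIntegrable_iff.2 fun K hK => hmint.integrableOn.mul_continuousOn
      (continuous_primitive hsc.intervalIntegrable 0).continuousOn hK
  rw [integrableOn_mul_integral_mul_setIntegral_Iio_iff hmint (fun y => (hmpos y).le) hmx hsc
      fun y => (hs y ▸ Real.exp_pos _).le,
    integrableOn_mul_integral_iff_of_integrable hmint hsc.intervalIntegrable x 0,
    hH.integrableOn_Ioi_iff, hH.integrableOn_Ioi_iff]
end

section
/- Let $a:\mathbb{R}\to(0,\infty)$ and $b:\mathbb{R}\to\mathbb{R}$ be continuous, $B(x)=\int_0^x b/a$, $m=a^{-1}e^{2B}$, $s=e^{-2B}$, $\mu = m/\int_{\mathbb{R}} m$ with $\int_{\mathbb{R}} m<\infty$. Assume both entrance-boundary conditions: $\int_0^{\infty} m(x)\int_0^x s\,dx<\infty$ and $\int_{-\infty}^0 m(x)\int_x^0 s\,dx<\infty$. Define $F(x) = 2\int_x^{\infty}\mu(y)\int_x^y s(z)\int_{-\infty}^z m(w)\,dw\,dz\,dy + 2\int_{-\infty}^x \mu(y)\int_y^x s(z)\int_z^{\infty} m(w)\,dw\,dz\,dy$. Then $F$ is twice differentiable and $\tfrac12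 a(x)F''(x)+b(x)F'(x)=0$ for all $x\in\mathbb{R}$. -/
/-!
`F` is in fact constant. With `M⁻(z) = ∫_{-∞}^z m` and `M⁺(z) = ∫_z^∞ m`, differentiating
under the outer integrals leaves only the boundary terms coming from the inner integrals:
`F'(x) = 2 s(x) (M⁺(x) μ(-∞, x) - M⁻(x) μ(x, ∞))`. Since `μ = m / ∫ m`, the two half-line
masses are `M⁻(x) / ∫ m` and `M⁺(x) / ∫ m`, so the two terms cancel. The integrals make sense
because `0 ≤ M^± ≤ ∫ m`, so the integrands are dominated by the entrance-boundary integrands.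
-/

open MeasureTheory Set

variable {f : ℝ → ℝ}

theorem Continuous.integrableOn_Ioi_of_integrableOn_Ioi (hf : Continuous f) {a : ℝ}
    (ha : IntegrableOn f (Ioi a)) (b : ℝ) : IntegrableOn f (Ioi b) :=
  (hf.integrableOn_Ioc.union ha).mono_set Ioi_subset_Ioc_union_Ioi

theorem Continuous.integrableOn_Iio_of_integrableOn_Iio (hf : Continuous f) {a : ℝ}
    (ha : IntegrableOn f (Iio a)) (b : ℝ) : IntegrableOn f (Iio b) :=
  (ha.union (hf.integrableOn_Icc.mono_set Ico_subset_Icc_self)).mono_set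
    Iio_subset_Iio_union_Ico

theorem hasDerivAt_setIntegral_Ioi (hf : Continuous f) {a : ℝ} (ha : IntegrableOn f (Ioi a))
    (x : ℝ) : HasDerivAt (fun u => ∫ t in Ioi u, f t) (-f x) x := by
  have h : (fun u => ∫ t in Ioi u, f t) =
      fun u => (∫ t in Ioi a, f t) - ∫ t in a..u, f t := by
    funext u
    rw [← intervalIntegral.integral_Ioi_sub_Ioi' ha
      (hf.integrableOn_Ioi_of_integrableOn_Ioi ha u), sub_sub_cancel]
  rw [h]
  exact (hf.integral_hasStrictDerivAt a x).hasDerivAt.const_sub _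

theorem hasDerivAt_setIntegral_Iio (hf : Continuous f) {a : ℝ} (ha : IntegrableOn f (Iio a))
    (x : ℝ) : HasDerivAt (fun u => ∫ t in Iio u, f t) (f x) x := by
  have h : (fun u => ∫ t in Iio u, f t) =
      fun u => (∫ t in Iio a, f t) + ∫ t in a..u, f t := by
    funext u
    rw [← intervalIntegral.integral_Iio_sub_Iio'
      (hf.integrableOn_Iio_of_integrableOn_Iio ha u) ha, add_sub_cancel]
  rw [h]
  exact (hf.integral_hasStrictDerivAt a x).hasDerivAt.const_add _

section

variable {μ g : ℝ → ℝ} {a : ℝ}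

theorem hasDerivAt_setIntegral_Ioi_mul_intervalIntegral (hμ : Continuous μ)
    (hg : Continuous g) (hμa : IntegrableOn μ (Ioi a))
    (hμg : IntegrableOn (fun y => μ y * ∫ z in a..y, g z) (Ioi a)) (x : ℝ) :
    HasDerivAt (fun u => ∫ y in Ioi u, μ y * ∫ z in u..y, g z)
      (-(g x * ∫ y in Ioi x, μ y)) x := by
  set G := fun u => ∫ z in a..u, g z
  have hG : ∀ u, HasDerivAt G (g u) u := fun u => (hg.integral_hasStrictDerivAt a u).hasDerivAt
  have hGc : Continuous G := continuous_iff_continuousAt.2 fun u => (hG u).continuousAt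
  have hμGc : Continuous fun y => μ y * G y := hμ.mul hGc
  have hsplit : ∀ u, ∫ y in Ioi u, μ y * ∫ z in u..y, g z =
      (∫ y in Ioi u, μ y * G y) - G u * ∫ y in Ioi u, μ y := by
    intro u
    have hint : ∀ y, μ y * ∫ z in u..y, g z = μ y * G y - G u * μ y := fun y => by
      rw [← intervalIntegral.integral_interval_sub_left (hg.intervalIntegrable a y)
        (hg.intervalIntegrable a u)]
      ring
    simp only [hint]
    rw [integral_sub (hμGc.integrableOn_Ioi_of_integrableOn_Ioi hμg u)
      ((hμ.integrableOn_Ioi_of_integrableOn_Ioi hμa u).const_mul _), integral_const_mul]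
  rw [funext hsplit]
  exact ((hasDerivAt_setIntegral_Ioi hμGc hμg x).sub
    ((hG x).mul (hasDerivAt_setIntegral_Ioi hμ hμa x))).congr_deriv (by ring)

theorem hasDerivAt_setIntegral_Iio_mul_intervalIntegral (hμ : Continuous μ)
    (hg : Continuous g) (hμa : IntegrableOn μ (Iio a))
    (hμg : IntegrableOn (fun y => μ y * ∫ z in y..a, g z) (Iio a)) (x : ℝ) :
    HasDerivAt (fun u => ∫ y in Iio u, μ y * ∫ z in y..u, g z)
      (g x * ∫ y in Iio x, μ y) x := by
  set G := fun u => ∫ z in a..u, g z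
  have hG : ∀ u, HasDerivAt G (g u) u := fun u => (hg.integral_hasStrictDerivAt a u).hasDerivAt
  have hGc : Continuous G := continuous_iff_continuousAt.2 fun u => (hG u).continuousAt
  have hμGc : Continuous fun y => μ y * G y := hμ.mul hGc
  have hμG : IntegrableOn (fun y => μ y * G y) (Iio a) := by
    refine hμg.neg.congr_fun (fun y _ => ?_) measurableSet_Iio
    simp only [G, Pi.neg_apply, intervalIntegral.integral_symm a y, mul_neg, neg_neg]
  have hsplit : ∀ u, ∫ y in Iio u, μ y * ∫ z in y..u, g z =
      G u * (∫ y in Iio u, μ y) - ∫ y in Iio u, μ y * G y := by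
    intro u
    have hint : ∀ y, μ y * ∫ z in y..u, g z = G u * μ y - μ y * G y := fun y => by
      rw [← intervalIntegral.integral_interval_sub_left (hg.intervalIntegrable a u)
        (hg.intervalIntegrable a y)]
      ring
    simp only [hint]
    rw [integral_sub ((hμ.integrableOn_Iio_of_integrableOn_Iio hμa u).const_mul _)
      (hμGc.integrableOn_Iio_of_integrableOn_Iio hμG u), integral_const_mul]
  rw [funext hsplit]
  exact ((hG x).mul (hasDerivAt_setIntegral_Iio hμ hμa x)).sub
    (hasDerivAt_setIntegral_Iio hμGc hμG x) |>.congr_deriv (by ring)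

end

theorem continuous_intervalIntegral {l r : ℝ → ℝ} (hf : Continuous f) (hl : Continuous l)
    (hr : Continuous r) : Continuous fun y => ∫ z in l y..r y, f z := by
  have h : (fun y => ∫ z in l y..r y, f z) =
      fun y => (∫ z in 0..r y, f z) - ∫ z in 0..l y, f z :=
    funext fun y => (intervalIntegral.integral_interval_sub_left (hf.intervalIntegrable _ _)
      (hf.intervalIntegrable _ _)).symm
  rw [h]
  fun_prop

theorem MeasureTheory.IntegrableOn.mul_intervalIntegral_of_abs_le {w g s l r : ℝ → ℝ}
    {S : Set ℝ} {C : ℝ}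
    (hws : IntegrableOn (fun y => w y * ∫ z in l y..r y, s z) S) (hS : MeasurableSet S)
    (hlr : ∀ y ∈ S, l y ≤ r y) (hw : Continuous w) (hw0 : ∀ y, 0 ≤ w y) (hg : Continuous g)
    (hs : Continuous s) (hl : Continuous l) (hr : Continuous r) (hgs : ∀ z, |g z| ≤ C * s z) :
    IntegrableOn (fun y => w y * ∫ z in l y..r y, g z) S := by
  refine (hws.const_mul C).mono'
    (hw.mul (continuous_intervalIntegral hg hl hr)).aestronglyMeasurable
    ((ae_restrict_iff' hS).2 (ae_of_all _ fun y hy => ?_))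
  have hint : ‖∫ z in l y..r y, g z‖ ≤ C * ∫ z in l y..r y, s z := by
    rw [← intervalIntegral.integral_const_mul]
    exact intervalIntegral.norm_integral_le_of_norm_le (hlr y hy)
      (ae_of_all _ fun z _ => hgs z) ((continuous_const.mul hs).intervalIntegrable _ _)
  rw [norm_mul, Real.norm_of_nonneg (hw0 y)]
  calc w y * ‖∫ z in l y..r y, g z‖ ≤ w y * (C * ∫ z in l y..r y, s z) :=
        mul_le_mul_of_nonneg_left hint (hw0 y)
    _ = C * (w y * ∫ z in l y..r y, s z) := by ring

noncomputable def averagedHittingTime (μ s m : ℝ → ℝ) (x : ℝ) : ℝ :=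
  2 * (∫ y in Ioi x, μ y * ∫ z in x..y, s z * ∫ w in Iio z, m w) +
    2 * (∫ y in Iio x, μ y * ∫ z in y..x, s z * ∫ w in Ioi z, m w)

theorem hasDerivAt_averagedHittingTime {m s : ℝ → ℝ} (hm : Continuous m) (hm0 : ∀ x, 0 ≤ m x)
    (hmint : Integrable m) (hs : Continuous s) (hs0 : ∀ x, 0 ≤ s x)
    (hentp : IntegrableOn (fun x => m x * ∫ t in (0:ℝ)..x, s t) (Ioi 0))
    (hentm : IntegrableOn (fun x => m x * ∫ t in x..(0:ℝ), s t) (Iio 0)) (x : ℝ) :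
    HasDerivAt (averagedHittingTime (fun y => m y / ∫ w, m w) s m) 0 x := by
  set T := ∫ w, m w
  set Mneg := fun z => ∫ w in Iio z, m w
  set Mpos := fun z => ∫ w in Ioi z, m w
  have hMneg : Continuous Mneg := continuous_iff_continuousAt.2 fun z =>
    (hasDerivAt_setIntegral_Iio hm (hmint.integrableOn (s := Iio 0)) z).continuousAt
  have hMpos : Continuous Mpos := continuous_iff_continuousAt.2 fun z =>
    (hasDerivAt_setIntegral_Ioi hm (hmint.integrableOn (s := Ioi 0)) z).continuousAt
  have hsM : ∀ (S : Set ℝ) z, |s z * ∫ w in S, m w| ≤ T * s z := fun S z => by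
    rw [abs_mul, abs_of_nonneg (hs0 z), abs_of_nonneg (integral_nonneg hm0), mul_comm]
    exact mul_le_mul_of_nonneg_right (setIntegral_le_integral hmint (ae_of_all _ hm0)) (hs0 z)
  have hsMneg : Continuous fun z => s z * Mneg z := hs.mul hMneg
  have hsMpos : Continuous fun z => s z * Mpos z := hs.mul hMpos
  have hμ : Continuous fun y => m y / T := hm.div_const T
  have hposInt : IntegrableOn (fun y => m y / T * ∫ z in 0..y, s z * Mneg z) (Ioi 0) := by
    have := hentp.mul_intervalIntegral_of_abs_le measurableSet_Ioi (fun _ hy => le_of_lt hy)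
      hm hm0 hsMneg hs continuous_const continuous_id fun z => hsM (Iio z) z
    simp only [div_mul_eq_mul_div]
    exact this.div_const T
  have hnegInt : IntegrableOn (fun y => m y / T * ∫ z in y..0, s z * Mpos z) (Iio 0) := by
    have := hentm.mul_intervalIntegral_of_abs_le measurableSet_Iio (fun _ hy => le_of_lt hy)
      hm hm0 hsMpos hs continuous_id continuous_const fun z => hsM (Ioi z) z
    simp only [div_mul_eq_mul_div]
    exact this.div_const T
  refine (((hasDerivAt_setIntegral_Ioi_mul_intervalIntegral hμ hsMneg
    (hmint.div_const T).integrableOn hposInt x).const_mul 2).add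
    ((hasDerivAt_setIntegral_Iio_mul_intervalIntegral hμ hsMpos
    (hmint.div_const T).integrableOn hnegInt x).const_mul 2)).congr_deriv ?_
  simp only [integral_div, Mneg, Mpos]
  ring

/-- The averaged expected hitting time `F` is twice differentiable and
`L`-harmonic: `(1/2) a F'' + b F' = 0`. -/
theorem stmt5 (a b B m s μ F : ℝ → ℝ)
    (ha : Continuous a) (hapos : ∀ x, 0 < a x) (hbc : Continuous b)
    (hB : ∀ x, B x = ∫ t in (0:ℝ)..x, b t / a t)
    (hm : ∀ x, m x = (a x)⁻¹ * Real.exp (2 * B x))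
    (hs : ∀ x, s x = Real.exp (-(2 * B x)))
    (hmint : Integrable m)
    (hμ : ∀ x, μ x = m x / ∫ w, m w)
    (hentp : IntegrableOn (fun x => m x * ∫ t in (0:ℝ)..x, s t) (Ioi 0))
    (hentm : IntegrableOn (fun x => m x * ∫ t in x..(0:ℝ), s t) (Iio 0))
    (hF : ∀ x, F x =
        2 * (∫ y in Ioi x, μ y * ∫ z in x..y, s z * ∫ w in Iio z, m w) +
        2 * (∫ y in Iio x, μ y * ∫ z in y..x, s z * ∫ w in Ioi z, m w)) :
    (∀ x, DifferentiableAt ℝ F x) ∧ (∀ x, DifferentiableAt ℝ (deriv F) x) ∧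
      ∀ x, (1/2) * a x * deriv (deriv F) x + b x * deriv F x = 0 := by
  have ha0 : ∀ x, a x ≠ 0 := fun x => (hapos x).ne'
  have hBc : Continuous B := by
    rw [funext hB]
    exact intervalIntegral.continuous_primitive
      (fun _ _ => (hbc.div ha ha0).intervalIntegrable _ _) 0
  have hmc : Continuous m := by
    rw [funext hm]
    exact (ha.inv₀ ha0).mul (by fun_prop)
  have hsc : Continuous s := by
    rw [funext hs]
    fun_prop
  have hm0 : ∀ x, 0 ≤ m x := fun x => by
    rw [hm x]
    exact mul_nonneg (inv_nonneg.2 (hapos x).le) (Real.exp_pos _).le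
  have hs0 : ∀ x, 0 ≤ s x := fun x => by
    rw [hs x]
    positivity
  have hF' : ∀ x, HasDerivAt F 0 x := by
    rw [show F = averagedHittingTime μ s m from funext hF, show μ = _ from funext hμ]
    exact hasDerivAt_averagedHittingTime hmc hm0 hmint hsc hs0 hentp hentm
  have hderiv : deriv F = 0 := funext fun x => (hF' x).deriv
  refine ⟨fun x => (hF' x).differentiableAt, fun x => ?_, fun x => ?_⟩ <;> simp [hderiv]
end

section
/- Let $a,b,B,m,s,\mu$ be as above with $\int_{\mathbb{R}} m<\infty$ and both entrance-boundary conditions $\int_0^{\infty} m\int_0^{\cdot} s<\infty$, $\int_{-\infty}^0 m\int_{\cdot}^0 s<\infty$ holding. Then the function $F(x) = 2\int_x^{\infty}\mu(y)\int_x^y s(z)\int_{-\infty}^z m(w)\,dw\,dz\,dy + 2\int_{-\infty}^x \mu(y)\int_y^x s(z)\int_z^{\infty} m(w)\,dw\,dz\,dy$ is constant in $x$. -/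
open MeasureTheory Set

/-- Domination lemma on the right half line. -/
lemma kem_dom_right (m s g : ℝ → ℝ) (C x : ℝ)
    (hmc : Continuous m) (hm0 : ∀ y, 0 ≤ m y) (hmi : Integrable m)
    (hsc : Continuous s)
    (hgc : Continuous g) (hg0 : ∀ z, 0 ≤ g z)
    (hgs : ∀ z, g z ≤ C * s z)
    (hent : IntegrableOn (fun y => m y * ∫ t in (0:ℝ)..y, s t) (Ioi 0)) :
    IntegrableOn (fun y => m y * ∫ t in x..y, g t) (Ioi x) := by
  have hscont : Continuous fun y => ∫ t in (0:ℝ)..y, s t :=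
    intervalIntegral.continuous_primitive (fun a b => hsc.intervalIntegrable a b) 0
  have hbase : IntegrableOn (fun y => m y * ∫ t in (0:ℝ)..y, s t) (Ioi x) := by
    rcases le_or_gt 0 x with hx | hx
    · exact hent.mono_set (Ioi_subset_Ioi hx)
    · rw [← Ioc_union_Ioi_eq_Ioi hx.le]
      exact ((hmc.mul hscont).integrableOn_Ioc).union hent
  have hphi : IntegrableOn
      (fun y => C * (m y * ∫ t in (0:ℝ)..y, s t) - (C * ∫ t in (0:ℝ)..x, s t) * m y)
      (Ioi x) :=
    (hbase.const_mul C).sub (hmi.integrableOn.const_mul _)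
  refine Integrable.mono' hphi ?_ ?_
  · exact ((hmc.mul (intervalIntegral.continuous_primitive
      (fun a b => hgc.intervalIntegrable a b) x)).aestronglyMeasurable).restrict
  · rw [ae_restrict_iff' measurableSet_Ioi]
    filter_upwards with y hy
    have hxy : x ≤ y := le_of_lt hy
    have h1 : 0 ≤ ∫ t in x..y, g t :=
      intervalIntegral.integral_nonneg hxy fun t _ => hg0 t
    rw [Real.norm_eq_abs, abs_of_nonneg (mul_nonneg (hm0 y) h1)]
    have h2 : (∫ t in x..y, g t) ≤ ∫ t in x..y, C * s t :=
      intervalIntegral.integral_mono_on hxy (hgc.intervalIntegrable x y)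
        ((continuous_const.mul hsc).intervalIntegrable x y) (fun t _ => hgs t)
    rw [intervalIntegral.integral_const_mul] at h2
    have hsx : (∫ t in x..y, s t) = (∫ t in (0:ℝ)..y, s t) - ∫ t in (0:ℝ)..x, s t :=
      (intervalIntegral.integral_interval_sub_left (hsc.intervalIntegrable 0 y)
        (hsc.intervalIntegrable 0 x)).symm
    calc m y * ∫ t in x..y, g t
        ≤ m y * (C * ∫ t in x..y, s t) := mul_le_mul_of_nonneg_left h2 (hm0 y)
      _ = C * (m y * ∫ t in (0:ℝ)..y, s t) - (C * ∫ t in (0:ℝ)..x, s t) * m y := by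
          rw [hsx]; ring

/-- Domination lemma on the left half line. -/
lemma kem_dom_left (m s g : ℝ → ℝ) (C x : ℝ)
    (hmc : Continuous m) (hm0 : ∀ y, 0 ≤ m y) (hmi : Integrable m)
    (hsc : Continuous s)
    (hgc : Continuous g) (hg0 : ∀ z, 0 ≤ g z)
    (hgs : ∀ z, g z ≤ C * s z)
    (hent : IntegrableOn (fun y => m y * ∫ t in y..(0:ℝ), s t) (Iio 0)) :
    IntegrableOn (fun y => m y * ∫ t in y..x, g t) (Iio x) := by
  have hsymm : ∀ (f : ℝ → ℝ) (c : ℝ), (fun y => ∫ t in y..c, f t)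
      = fun y => -∫ t in c..y, f t := by
    intro f c; funext y; rw [intervalIntegral.integral_symm]
  have hscont : Continuous fun y => ∫ t in y..(0:ℝ), s t := by
    rw [hsymm s 0]
    exact (intervalIntegral.continuous_primitive (fun a b => hsc.intervalIntegrable a b) 0).neg
  have hgcont : Continuous fun y => ∫ t in y..x, g t := by
    rw [hsymm g x]
    exact (intervalIntegral.continuous_primitive (fun a b => hgc.intervalIntegrable a b) x).neg
  have hbase : IntegrableOn (fun y => m y * ∫ t in y..(0:ℝ), s t) (Iio x) := by
    rcases le_or_gt x 0 with hx | hx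
    · exact hent.mono_set (Iio_subset_Iio hx)
    · rw [← Iio_union_Ico_eq_Iio hx.le]
      exact hent.union (((hmc.mul hscont).integrableOn_Icc).mono_set Ico_subset_Icc_self)
  have hphi : IntegrableOn
      (fun y => C * (m y * ∫ t in y..(0:ℝ), s t) + (C * ∫ t in (0:ℝ)..x, s t) * m y)
      (Iio x) :=
    (hbase.const_mul C).add (hmi.integrableOn.const_mul _)
  refine Integrable.mono' hphi ?_ ?_
  · exact ((hmc.mul hgcont).aestronglyMeasurable).restrict
  · rw [ae_restrict_iff' measurableSet_Iio]
    filter_upwards with y hy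
    have hxy : y ≤ x := le_of_lt hy
    have h1 : 0 ≤ ∫ t in y..x, g t :=
      intervalIntegral.integral_nonneg hxy fun t _ => hg0 t
    rw [Real.norm_eq_abs, abs_of_nonneg (mul_nonneg (hm0 y) h1)]
    have h2 : (∫ t in y..x, g t) ≤ ∫ t in y..x, C * s t :=
      intervalIntegral.integral_mono_on hxy (hgc.intervalIntegrable y x)
        ((continuous_const.mul hsc).intervalIntegrable y x) (fun t _ => hgs t)
    rw [intervalIntegral.integral_const_mul] at h2
    have hsx : (∫ t in y..x, s t) = (∫ t in y..(0:ℝ), s t) + ∫ t in (0:ℝ)..x, s t :=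
      (intervalIntegral.integral_add_adjacent_intervals (hsc.intervalIntegrable y 0)
        (hsc.intervalIntegrable 0 x)).symm
    calc m y * ∫ t in y..x, g t
        ≤ m y * (C * ∫ t in y..x, s t) := mul_le_mul_of_nonneg_left h2 (hm0 y)
      _ = C * (m y * ∫ t in y..(0:ℝ), s t) + (C * ∫ t in (0:ℝ)..x, s t) * m y := by
          rw [hsx]; ring

/-- Fubini on the right half line. -/
lemma kem_fubini_right (m g : ℝ → ℝ) (x : ℝ)
    (hmc : Continuous m) (hm0 : ∀ y, 0 ≤ m y)
    (hgc : Continuous g) (hg0 : ∀ z, 0 ≤ g z)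
    (hdom : IntegrableOn (fun y => m y * ∫ t in x..y, g t) (Ioi x)) :
    (∫ y in Ioi x, m y * ∫ t in x..y, g t) = (∫ z in Ioi x, g z * ∫ y in Ioi z, m y)
    ∧ IntegrableOn (fun z => g z * ∫ y in Ioi z, m y) (Ioi x) := by
  set S : Set (ℝ × ℝ) := {p | x < p.2 ∧ p.2 ≤ p.1} with hSdef
  have hS : MeasurableSet S :=
    (measurableSet_lt measurable_const measurable_snd).inter
      (measurableSet_le measurable_snd measurable_fst)
  set G : ℝ → ℝ → ℝ := fun y z => S.indicator (fun p => m p.1 * g p.2) (y, z) with hGdef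
  have hGmeas : AEStronglyMeasurable (Function.uncurry G) (volume.prod volume) :=
    (((hmc.comp continuous_fst).mul (hgc.comp continuous_snd)).aestronglyMeasurable).indicator hS
  have hGsec : ∀ y z, G y z = (Ioc x y).indicator (fun z => m y * g z) z := by
    intro y z
    by_cases h : x < z ∧ z ≤ y
    · show S.indicator _ (y, z) = _
      rw [indicator_of_mem (show (y, z) ∈ S from h),
        indicator_of_mem (show z ∈ Ioc x y from h)]
    · show S.indicator _ (y, z) = _
      rw [indicator_of_notMem (show (y, z) ∉ S from h),
        indicator_of_notMem (show z ∉ Ioc x y from h)]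
  have hsecint : ∀ y, Integrable (G y) := by
    intro y
    rw [show G y = (Ioc x y).indicator (fun z => m y * g z) from funext (hGsec y)]
    exact ((continuous_const.mul hgc).integrableOn_Ioc).integrable_indicator measurableSet_Ioc
  have hint : ∀ y, (∫ z, G y z) = (Ioi x).indicator (fun y => m y * ∫ t in x..y, g t) y := by
    intro y
    rcases le_or_gt y x with h | h
    · rw [indicator_of_notMem (by simpa using not_lt.mpr h)]
      have h0 : ∀ z, G y z = 0 := by
        intro z; rw [hGsec, Ioc_eq_empty (not_lt.mpr h), indicator_empty]
      simp [h0]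
    · rw [indicator_of_mem (mem_Ioi.mpr h)]
      calc (∫ z, G y z) = ∫ z, (Ioc x y).indicator (fun z => m y * g z) z := by
              simp_rw [hGsec]
        _ = ∫ z in Ioc x y, m y * g z := integral_indicator measurableSet_Ioc
        _ = m y * ∫ z in Ioc x y, g z := integral_const_mul _ _
        _ = m y * ∫ t in x..y, g t := by rw [intervalIntegral.integral_of_le h.le]
  have hnormint : ∀ y, (∫ z, ‖G y z‖)
      = (Ioi x).indicator (fun y => m y * ∫ t in x..y, g t) y := by
    intro y
    have h1 : ∀ z, ‖G y z‖ = G y z := by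
      intro z
      rw [hGsec]
      by_cases hz : z ∈ Ioc x y
      · rw [indicator_of_mem hz, Real.norm_eq_abs]
        exact abs_of_nonneg (mul_nonneg (hm0 y) (hg0 z))
      · rw [indicator_of_notMem hz]
        exact norm_zero
    simp_rw [h1]
    exact hint y
  have hGint : Integrable (Function.uncurry G) (volume.prod volume) := by
    refine (integrable_prod_iff hGmeas).2 ⟨Filter.Eventually.of_forall hsecint, ?_⟩
    have : (fun y => ∫ z, ‖Function.uncurry G (y, z)‖)
        = (Ioi x).indicator (fun y => m y * ∫ t in x..y, g t) := funext hnormint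
    rw [this]
    exact hdom.integrable_indicator measurableSet_Ioi
  have hswap := integral_integral_swap hGint
  have hzsec : ∀ z, (∫ y, G y z)
      = (Ioi x).indicator (fun z => g z * ∫ y in Ici z, m y) z := by
    intro z
    by_cases h : x < z
    · rw [indicator_of_mem (mem_Ioi.mpr h)]
      have h1 : ∀ y, G y z = (Ici z).indicator (fun y => m y * g z) y := by
        intro y
        by_cases hy : z ≤ y
        · show S.indicator _ (y, z) = _
          rw [indicator_of_mem (show (y, z) ∈ S from ⟨h, hy⟩),
            indicator_of_mem (show y ∈ Ici z from hy)]
        · show S.indicator _ (y, z) = _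
          rw [indicator_of_notMem (show (y, z) ∉ S from fun hc => hy hc.2),
            indicator_of_notMem (show y ∉ Ici z from hy)]
      calc (∫ y, G y z) = ∫ y, (Ici z).indicator (fun y => m y * g z) y := by simp_rw [h1]
        _ = ∫ y in Ici z, m y * g z := integral_indicator measurableSet_Ici
        _ = (∫ y in Ici z, m y) * g z := integral_mul_const _ _
        _ = g z * ∫ y in Ici z, m y := mul_comm _ _
    · rw [indicator_of_notMem (by simpa using h)]
      have h0 : ∀ y, G y z = 0 := by
        intro y
        show S.indicator _ (y, z) = _
        exact indicator_of_notMem (show (y, z) ∉ S from fun hc => h hc.1) _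
      simp [h0]
  have hR : (∫ z, ∫ y, G y z) = ∫ z in Ioi x, g z * ∫ y in Ioi z, m y := by
    simp_rw [hzsec]
    rw [integral_indicator measurableSet_Ioi]
    exact setIntegral_congr_fun measurableSet_Ioi fun z _ => by
      rw [integral_Ici_eq_integral_Ioi]
  have hL : (∫ y, ∫ z, G y z) = ∫ y in Ioi x, m y * ∫ t in x..y, g t := by
    simp_rw [hint]
    exact integral_indicator measurableSet_Ioi
  constructor
  · rw [← hL, hswap, hR]
  · have h2 := hGint.integral_prod_right
    have h3 : (fun z => ∫ y, Function.uncurry G (y, z))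
        = (Ioi x).indicator (fun z => g z * ∫ y in Ici z, m y) := funext hzsec
    rw [h3, integrable_indicator_iff measurableSet_Ioi] at h2
    have h4 : (fun z => g z * ∫ y in Ici z, m y) = fun z => g z * ∫ y in Ioi z, m y := by
      funext z; rw [integral_Ici_eq_integral_Ioi]
    rwa [h4] at h2

/-- Fubini on the left half line. -/
lemma kem_fubini_left (m g : ℝ → ℝ) (x : ℝ)
    (hmc : Continuous m) (hm0 : ∀ y, 0 ≤ m y)
    (hgc : Continuous g) (hg0 : ∀ z, 0 ≤ g z)
    (hdom : IntegrableOn (fun y => m y * ∫ t in y..x, g t) (Iio x)) :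
    (∫ y in Iio x, m y * ∫ t in y..x, g t) = (∫ z in Iio x, g z * ∫ y in Iio z, m y)
    ∧ IntegrableOn (fun z => g z * ∫ y in Iio z, m y) (Iio x) := by
  set S : Set (ℝ × ℝ) := {p | p.1 < p.2 ∧ p.2 ≤ x} with hSdef
  have hS : MeasurableSet S :=
    (measurableSet_lt measurable_fst measurable_snd).inter
      (measurableSet_le measurable_snd measurable_const)
  set G : ℝ → ℝ → ℝ := fun y z => S.indicator (fun p => m p.1 * g p.2) (y, z) with hGdef
  have hGmeas : AEStronglyMeasurable (Function.uncurry G) (volume.prod volume) :=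
    (((hmc.comp continuous_fst).mul (hgc.comp continuous_snd)).aestronglyMeasurable).indicator hS
  have hGsec : ∀ y z, G y z = (Ioc y x).indicator (fun z => m y * g z) z := by
    intro y z
    by_cases h : y < z ∧ z ≤ x
    · show S.indicator _ (y, z) = _
      rw [indicator_of_mem (show (y, z) ∈ S from h),
        indicator_of_mem (show z ∈ Ioc y x from h)]
    · show S.indicator _ (y, z) = _
      rw [indicator_of_notMem (show (y, z) ∉ S from h),
        indicator_of_notMem (show z ∉ Ioc y x from h)]
  have hsecint : ∀ y, Integrable (G y) := by
    intro y
    rw [show G y = (Ioc y x).indicator (fun z => m y * g z) from funext (hGsec y)]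
    exact ((continuous_const.mul hgc).integrableOn_Ioc).integrable_indicator measurableSet_Ioc
  have hint : ∀ y, (∫ z, G y z) = (Iio x).indicator (fun y => m y * ∫ t in y..x, g t) y := by
    intro y
    rcases le_or_gt x y with h | h
    · rw [indicator_of_notMem (by simpa using not_lt.mpr h)]
      have h0 : ∀ z, G y z = 0 := by
        intro z; rw [hGsec, Ioc_eq_empty (not_lt.mpr h), indicator_empty]
      simp [h0]
    · rw [indicator_of_mem (mem_Iio.mpr h)]
      calc (∫ z, G y z) = ∫ z, (Ioc y x).indicator (fun z => m y * g z) z := by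
              simp_rw [hGsec]
        _ = ∫ z in Ioc y x, m y * g z := integral_indicator measurableSet_Ioc
        _ = m y * ∫ z in Ioc y x, g z := integral_const_mul _ _
        _ = m y * ∫ t in y..x, g t := by rw [intervalIntegral.integral_of_le h.le]
  have hnormint : ∀ y, (∫ z, ‖G y z‖)
      = (Iio x).indicator (fun y => m y * ∫ t in y..x, g t) y := by
    intro y
    have h1 : ∀ z, ‖G y z‖ = G y z := by
      intro z
      rw [hGsec]
      by_cases hz : z ∈ Ioc y x
      · rw [indicator_of_mem hz, Real.norm_eq_abs]
        exact abs_of_nonneg (mul_nonneg (hm0 y) (hg0 z))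
      · rw [indicator_of_notMem hz]
        exact norm_zero
    simp_rw [h1]
    exact hint y
  have hGint : Integrable (Function.uncurry G) (volume.prod volume) := by
    refine (integrable_prod_iff hGmeas).2 ⟨Filter.Eventually.of_forall hsecint, ?_⟩
    have : (fun y => ∫ z, ‖Function.uncurry G (y, z)‖)
        = (Iio x).indicator (fun y => m y * ∫ t in y..x, g t) := funext hnormint
    rw [this]
    exact hdom.integrable_indicator measurableSet_Iio
  have hswap := integral_integral_swap hGint
  have hzsec : ∀ z, (∫ y, G y z)
      = (Iic x).indicator (fun z => g z * ∫ y in Iio z, m y) z := by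
    intro z
    by_cases h : z ≤ x
    · rw [indicator_of_mem (mem_Iic.mpr h)]
      have h1 : ∀ y, G y z = (Iio z).indicator (fun y => m y * g z) y := by
        intro y
        by_cases hy : y < z
        · show S.indicator _ (y, z) = _
          rw [indicator_of_mem (show (y, z) ∈ S from ⟨hy, h⟩),
            indicator_of_mem (show y ∈ Iio z from hy)]
        · show S.indicator _ (y, z) = _
          rw [indicator_of_notMem (show (y, z) ∉ S from fun hc => hy hc.1),
            indicator_of_notMem (show y ∉ Iio z from hy)]
      calc (∫ y, G y z) = ∫ y, (Iio z).indicator (fun y => m y * g z) y := by simp_rw [h1]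
        _ = ∫ y in Iio z, m y * g z := integral_indicator measurableSet_Iio
        _ = (∫ y in Iio z, m y) * g z := integral_mul_const _ _
        _ = g z * ∫ y in Iio z, m y := mul_comm _ _
    · rw [indicator_of_notMem (by simpa using h)]
      have h0 : ∀ y, G y z = 0 := by
        intro y
        show S.indicator _ (y, z) = _
        exact indicator_of_notMem (show (y, z) ∉ S from fun hc => h hc.2) _
      simp [h0]
  have hR : (∫ z, ∫ y, G y z) = ∫ z in Iio x, g z * ∫ y in Iio z, m y := by
    simp_rw [hzsec]
    rw [integral_indicator measurableSet_Iic]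
    exact integral_Iic_eq_integral_Iio
  have hL : (∫ y, ∫ z, G y z) = ∫ y in Iio x, m y * ∫ t in y..x, g t := by
    simp_rw [hint]
    exact integral_indicator measurableSet_Iio
  constructor
  · rw [← hL, hswap, hR]
  · have h2 := hGint.integral_prod_right
    have h3 : (fun z => ∫ y, Function.uncurry G (y, z))
        = (Iic x).indicator (fun z => g z * ∫ y in Iio z, m y) := funext hzsec
    rw [h3, integrable_indicator_iff measurableSet_Iic] at h2
    exact h2.mono_set Iio_subset_Iic_self

/-- Kemeny's constant for diffusions: the averaged expected hitting time `F`
does not depend on the starting point. -/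
theorem stmt6 (a b B m s μ F : ℝ → ℝ)
    (ha : Continuous a) (hapos : ∀ x, 0 < a x) (hbc : Continuous b)
    (hB : ∀ x, B x = ∫ t in (0:ℝ)..x, b t / a t)
    (hm : ∀ x, m x = (a x)⁻¹ * Real.exp (2 * B x))
    (hs : ∀ x, s x = Real.exp (-(2 * B x)))
    (hmint : Integrable m)
    (hμ : ∀ x, μ x = m x / ∫ w, m w)
    (hentp : IntegrableOn (fun x => m x * ∫ t in (0:ℝ)..x, s t) (Ioi 0))
    (hentm : IntegrableOn (fun x => m x * ∫ t in x..(0:ℝ), s t) (Iio 0))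
    (hF : ∀ x, F x =
        2 * (∫ y in Ioi x, μ y * ∫ z in x..y, s z * ∫ w in Iio z, m w) +
        2 * (∫ y in Iio x, μ y * ∫ z in y..x, s z * ∫ w in Ioi z, m w)) :
    ∀ x₁ x₂ : ℝ, F x₁ = F x₂ := by
  have hba : Continuous fun t => b t / a t := hbc.div ha fun t => (hapos t).ne'
  have hBc : Continuous B := by
    rw [show B = fun x => ∫ t in (0:ℝ)..x, b t / a t from funext hB]
    exact intervalIntegral.continuous_primitive (fun c d => hba.intervalIntegrable c d) 0
  have hmc : Continuous m := by
    rw [show m = fun x => (a x)⁻¹ * Real.exp (2 * B x) from funext hm]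
    exact (ha.inv₀ fun t => (hapos t).ne').mul
      (Real.continuous_exp.comp (continuous_const.mul hBc))
  have hm0 : ∀ t, 0 < m t := fun t => by
    rw [hm t]; exact mul_pos (inv_pos.2 (hapos t)) (Real.exp_pos _)
  have hsc : Continuous s := by
    rw [show s = fun x => Real.exp (-(2 * B x)) from funext hs]
    exact Real.continuous_exp.comp (continuous_const.mul hBc).neg
  have hs0 : ∀ t, 0 < s t := fun t => by rw [hs t]; exact Real.exp_pos _
  set T := ∫ w, m w with hTdef
  have hT0 : 0 < T := by
    rw [hTdef]
    refine (integral_pos_iff_support_of_nonneg (fun t => (hm0 t).le) hmint).2 ?_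
    rw [show Function.support m = Set.univ from eq_univ_of_forall fun t => (hm0 t).ne']
    simp
  have hMme : ∀ z, (∫ w in Iio z, m w) = (∫ w in Iic (0:ℝ), m w) + ∫ w in (0:ℝ)..z, m w := by
    intro z
    rw [← integral_Iic_eq_integral_Iio,
      ← intervalIntegral.integral_Iic_sub_Iic hmint.integrableOn hmint.integrableOn]
    ring
  have hMmc : Continuous fun z => ∫ w in Iio z, m w := by
    rw [show (fun z => ∫ w in Iio z, m w)
      = fun z => (∫ w in Iic (0:ℝ), m w) + ∫ w in (0:ℝ)..z, m w from funext hMme]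
    exact continuous_const.add
      (intervalIntegral.continuous_primitive (fun c d => hmint.intervalIntegrable) 0)
  have hMp : ∀ z, (∫ w in Ioi z, m w) = T - ∫ w in Iio z, m w := by
    intro z
    have h := intervalIntegral.integral_Iio_add_Ici (b := z) hmint.integrableOn hmint.integrableOn
    rw [integral_Ici_eq_integral_Ioi] at h
    rw [hTdef]; linarith
  have hMpc : Continuous fun z => ∫ w in Ioi z, m w := by
    rw [show (fun z => ∫ w in Ioi z, m w) = fun z => T - ∫ w in Iio z, m w from funext hMp]
    exact continuous_const.sub hMmc
  have hMm0 : ∀ z, 0 ≤ ∫ w in Iio z, m w := fun z =>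
    setIntegral_nonneg measurableSet_Iio fun t _ => (hm0 t).le
  have hMp0 : ∀ z, 0 ≤ ∫ w in Ioi z, m w := fun z =>
    setIntegral_nonneg measurableSet_Ioi fun t _ => (hm0 t).le
  have hMmT : ∀ z, (∫ w in Iio z, m w) ≤ T := fun z =>
    setIntegral_le_integral hmint (Filter.Eventually.of_forall fun t => (hm0 t).le)
  have hMpT : ∀ z, (∫ w in Ioi z, m w) ≤ T := fun z =>
    setIntegral_le_integral hmint (Filter.Eventually.of_forall fun t => (hm0 t).le)
  have hg1c : Continuous fun z => s z * ∫ w in Iio z, m w := hsc.mul hMmc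
  have hg2c : Continuous fun z => s z * ∫ w in Ioi z, m w := hsc.mul hMpc
  have hg10 : ∀ z, 0 ≤ s z * ∫ w in Iio z, m w := fun z => mul_nonneg (hs0 z).le (hMm0 z)
  have hg20 : ∀ z, 0 ≤ s z * ∫ w in Ioi z, m w := fun z => mul_nonneg (hs0 z).le (hMp0 z)
  have hg1T : ∀ z, s z * (∫ w in Iio z, m w) ≤ T * s z := fun z => by
    calc s z * ∫ w in Iio z, m w ≤ s z * T :=
          mul_le_mul_of_nonneg_left (hMmT z) (hs0 z).le
      _ = T * s z := mul_comm _ _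
  have hg2T : ∀ z, s z * (∫ w in Ioi z, m w) ≤ T * s z := fun z => by
    calc s z * ∫ w in Ioi z, m w ≤ s z * T :=
          mul_le_mul_of_nonneg_left (hMpT z) (hs0 z).le
      _ = T * s z := mul_comm _ _
  have key : ∀ x, F x
      = 2 / T * ∫ z, (s z * ∫ w in Iio z, m w) * ∫ w in Ioi z, m w := by
    intro x
    obtain ⟨e1, i1⟩ := kem_fubini_right m (fun z => s z * ∫ w in Iio z, m w) x
      hmc (fun t => (hm0 t).le) hg1c hg10
      (kem_dom_right m s (fun z => s z * ∫ w in Iio z, m w) T x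
        hmc (fun t => (hm0 t).le) hmint hsc hg1c hg10 hg1T hentp)
    obtain ⟨e2, i2⟩ := kem_fubini_left m (fun z => s z * ∫ w in Ioi z, m w) x
      hmc (fun t => (hm0 t).le) hg2c hg20
      (kem_dom_left m s (fun z => s z * ∫ w in Ioi z, m w) T x
        hmc (fun t => (hm0 t).le) hmint hsc hg2c hg20 hg2T hentm)

    rw [hF x]
    have ht1 : (∫ y in Ioi x, μ y * ∫ z in x..y, s z * ∫ w in Iio z, m w)
        = (∫ y in Ioi x, m y * ∫ t in x..y, s t * ∫ w in Iio t, m w) / T := by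
      rw [← integral_div]
      refine setIntegral_congr_fun measurableSet_Ioi fun y _ => ?_
      rw [hμ y]; ring
    have ht2 : (∫ y in Iio x, μ y * ∫ z in y..x, s z * ∫ w in Ioi z, m w)
        = (∫ y in Iio x, m y * ∫ t in y..x, s t * ∫ w in Ioi t, m w) / T := by
      rw [← integral_div]
      refine setIntegral_congr_fun measurableSet_Iio fun y _ => ?_
      rw [hμ y]; ring
    rw [ht1, ht2, e1, e2]
    have hφ2 : (∫ z in Iio x, (s z * ∫ w in Ioi z, m w) * ∫ y in Iio z, m y)
        = ∫ z in Iio x, (s z * ∫ w in Iio z, m w) * ∫ w in Ioi z, m w :=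
      setIntegral_congr_fun measurableSet_Iio fun z _ => by ring
    rw [hφ2]
    have i2' : IntegrableOn (fun z => (s z * ∫ w in Iio z, m w) * ∫ w in Ioi z, m w)
        (Iio x) := i2.congr (Filter.Eventually.of_forall fun z => by ring)
    clear i2
    rename' i2' => i2
    have hsing : IntegrableOn (fun z => (s z * ∫ w in Iio z, m w) * ∫ w in Ioi z, m w)
        ({x} : Set ℝ) := by
      rw [IntegrableOn, Measure.restrict_eq_zero.mpr Real.volume_singleton]
      exact integrable_zero_measure
    have iIic : IntegrableOn (fun z => (s z * ∫ w in Iio z, m w) * ∫ w in Ioi z, m w)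
        (Iic x) := by
      rw [← Iio_union_right]
      exact i2.union hsing
    have hsum := intervalIntegral.integral_Iic_add_Ioi iIic i1
    rw [integral_Iic_eq_integral_Iio] at hsum
    rw [← hsum]
    have hTne : T ≠ 0 := hT0.ne'
    field_simp
    ring
  intro x₁ x₂
  rw [key x₁, key x₂]
end

section
/- Under the hypotheses of positive recurrence and both entrance boundary conditions, $2\int_{-\infty}^{\infty}\mu(y)\int_y^{\infty}\frac{\mu([z,\infty))}{\mu(z)a(z)}dz\,dy = 2\int_{-\infty}^{\infty}\mu(y)\int_{-\infty}^{y}\frac{\mu((-\infty,z])}{\mu(z)a(z)}dz\,dy$. -/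
open MeasureTheory Set

/-- Tonelli-type swap for lower integrals over the region `y < z`. -/
lemma lint_swap (f g : ℝ → ENNReal) (hf : Measurable f) (hg : Measurable g) :
    ∫⁻ y, f y * ∫⁻ z in Ioi y, g z = ∫⁻ z, g z * ∫⁻ y in Iio z, f y := by
  have key : ∀ (y z : ℝ), f y * (Ioi y).indicator g z
      = {p : ℝ × ℝ | p.1 < p.2}.indicator (fun p => f p.1 * g p.2) (y, z) := by
    intro y z
    by_cases h : y < z
    · simp [indicator_of_mem, h, mem_Ioi.mpr h, Set.indicator_apply]
    · simp [Set.indicator_apply, h, mem_Ioi]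
  have hS : MeasurableSet {p : ℝ × ℝ | p.1 < p.2} :=
    measurableSet_lt measurable_fst measurable_snd
  have hmeas : Measurable ({p : ℝ × ℝ | p.1 < p.2}.indicator
      (fun p : ℝ × ℝ => f p.1 * g p.2)) :=
    ((hf.comp measurable_fst).mul (hg.comp measurable_snd)).indicator hS
  calc ∫⁻ y, f y * ∫⁻ z in Ioi y, g z
      = ∫⁻ y, ∫⁻ z, f y * (Ioi y).indicator g z := by
        refine lintegral_congr fun y => ?_
        rw [lintegral_const_mul _ (hg.indicator measurableSet_Ioi),
          lintegral_indicator measurableSet_Ioi]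
    _ = ∫⁻ z, ∫⁻ y, f y * (Ioi y).indicator g z := by
        rw [lintegral_lintegral_swap]
        simp only [key]
        exact hmeas.aemeasurable
    _ = ∫⁻ z, g z * ∫⁻ y in Iio z, f y := by
        refine lintegral_congr fun z => ?_
        have : ∀ y, f y * (Ioi y).indicator g z
            = (Iio z).indicator (fun y => g z * f y) y := by
          intro y
          by_cases h : y < z
          · simp [Set.indicator_apply, h, mem_Ioi, mul_comm]
          · simp [Set.indicator_apply, h, mem_Ioi]
        simp only [this]
        rw [lintegral_indicator measurableSet_Iio,
          lintegral_const_mul _ hf]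

/-- The two alternative closed-form expressions for Kemeny's constant
coincide. -/
theorem stmt8 (a b B m s μ : ℝ → ℝ)
    (ha : Continuous a) (hapos : ∀ x, 0 < a x) (hbc : Continuous b)
    (hB : ∀ x, B x = ∫ t in (0:ℝ)..x, b t / a t)
    (hm : ∀ x, m x = (a x)⁻¹ * Real.exp (2 * B x))
    (hs : ∀ x, s x = Real.exp (-(2 * B x)))
    (hmint : Integrable m)
    (hμ : ∀ x, μ x = m x / ∫ w, m w)
    (hentp : IntegrableOn (fun x => m x * ∫ t in (0:ℝ)..x, s t) (Ioi 0))
    (hentm : IntegrableOn (fun x => m x * ∫ t in x..(0:ℝ), s t) (Iio 0)) :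
    2 * (∫ y, μ y * ∫ z in Ioi y, (∫ w in Ioi z, μ w) / (μ z * a z)) =
    2 * (∫ y, μ y * ∫ z in Iio y, (∫ w in Iic z, μ w) / (μ z * a z)) := by
  -- Basic continuity and positivity facts
  have hBc : Continuous B := by
    have : Continuous fun x => ∫ t in (0:ℝ)..x, b t / a t :=
      intervalIntegral.continuous_primitive
        (fun c d => (hbc.div ha fun x => (hapos x).ne').intervalIntegrable c d) 0
    exact (funext hB ▸ this)
  have hmc : Continuous m := by
    have : Continuous fun x => (a x)⁻¹ * Real.exp (2 * B x) :=
      (ha.inv₀ fun x => (hapos x).ne').mul ((continuous_const.mul hBc).rexp)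
    exact (funext hm ▸ this)
  have hsc : Continuous s := by
    have : Continuous fun x => Real.exp (-(2 * B x)) :=
      ((continuous_const.mul hBc).neg).rexp
    exact (funext hs ▸ this)
  have hmpos : ∀ x, 0 < m x := fun x => by
    rw [hm]; exact mul_pos (inv_pos.mpr (hapos x)) (Real.exp_pos _)
  have hspos : ∀ x, 0 < s x := fun x => by rw [hs]; positivity
  set c : ℝ := ∫ w, m w with hcdef
  have hcpos : 0 < c := by
    rw [hcdef, integral_pos_iff_support_of_nonneg_ae
      (Filter.Eventually.of_forall fun x => (hmpos x).le) hmint]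
    have : Function.support m = univ := eq_univ_of_forall fun x => (hmpos x).ne'
    rw [this]
    simp
  set F : ℝ → ℝ := fun z => ∫ w in Ioi z, m w with hFdef
  set G : ℝ → ℝ := fun z => ∫ w in Iic z, m w with hGdef
  -- continuity of the primitives
  have hGc : Continuous G := by
    have h0 : ∀ z, G z = (∫ w in Iic (0:ℝ), m w) + ∫ w in (0:ℝ)..z, m w := by
      intro z
      rw [hGdef]
      rw [← intervalIntegral.integral_Iic_sub_Iic hmint.integrableOn hmint.integrableOn]
      ring
    rw [funext h0]
    exact continuous_const.add
      (intervalIntegral.continuous_primitive (fun c d => hmint.intervalIntegrable) 0)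
  have hFc : Continuous F := by
    have h0 : ∀ z, F z = c - G z := by
      intro z
      rw [eq_sub_iff_add_eq, add_comm, hFdef, hGdef, hcdef,
        intervalIntegral.integral_Iic_add_Ioi hmint.integrableOn hmint.integrableOn]
    rw [funext h0]
    exact continuous_const.sub hGc
  -- ENNReal versions
  set M : ℝ → ENNReal := fun x => ENNReal.ofReal (m x) with hM
  set S : ℝ → ENNReal := fun x => ENNReal.ofReal (s x) with hSdef
  set Fe : ℝ → ENNReal := fun z => ENNReal.ofReal (F z) with hFedef
  set Ge : ℝ → ENNReal := fun z => ENNReal.ofReal (G z) with hGedef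
  have hMm : Measurable M := ENNReal.measurable_ofReal.comp hmc.measurable
  have hSm : Measurable S := ENNReal.measurable_ofReal.comp hsc.measurable
  have hFem : Measurable Fe := ENNReal.measurable_ofReal.comp hFc.measurable
  have hGem : Measurable Ge := ENNReal.measurable_ofReal.comp hGc.measurable
  have hFnn : ∀ z, 0 ≤ F z := fun z =>
    setIntegral_nonneg measurableSet_Ioi fun w _ => (hmpos w).le
  have hGnn : ∀ z, 0 ≤ G z := fun z =>
    setIntegral_nonneg measurableSet_Iic fun w _ => (hmpos w).le
  have hFe : ∀ z, Fe z = ∫⁻ w in Ioi z, M w := fun z =>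
    ofReal_integral_eq_lintegral_ofReal hmint.integrableOn
      (Filter.Eventually.of_forall fun w => (hmpos w).le)
  have hGe : ∀ z, Ge z = ∫⁻ w in Iio z, M w := fun z => by
    have h1 : G z = ∫ w in Iio z, m w := (setIntegral_congr_set Iio_ae_eq_Iic).symm
    rw [hGedef]; simp only []; rw [h1]
    exact ofReal_integral_eq_lintegral_ofReal hmint.integrableOn
      (Filter.Eventually.of_forall fun w => (hmpos w).le)
  -- integrability of s·F on right half-line (uses hentp)
  have hSF0 : IntegrableOn (fun z => s z * F z) (Ioi 0) := by
    set g : ℝ → ENNReal := (Ioi (0:ℝ)).indicator S with hg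
    have hgm : Measurable g := hSm.indicator measurableSet_Ioi
    refine ⟨((hsc.mul hFc).aestronglyMeasurable).restrict, ?_⟩
    rw [hasFiniteIntegral_iff_ofReal (Filter.Eventually.of_forall
      fun z => mul_nonneg (hspos z).le (hFnn z))]
    have step1 : (∫⁻ z in Ioi (0:ℝ), ENNReal.ofReal (s z * F z))
        = ∫⁻ y, g y * ∫⁻ w in Ioi y, M w := by
      rw [← lintegral_indicator measurableSet_Ioi]
      refine lintegral_congr fun z => ?_
      by_cases h : z ∈ Ioi (0:ℝ)
      · rw [indicator_of_mem h, hg, indicator_of_mem h,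
          ENNReal.ofReal_mul (hspos z).le]
        exact congrArg (fun t => S z * t) (hFe z)
      · rw [indicator_of_notMem h, hg, indicator_of_notMem h, zero_mul]
    have step2 := lint_swap g M hgm hMm
    have step3 : (∫⁻ z, M z * ∫⁻ y in Iio z, g y)
        = ∫⁻ z in Ioi (0:ℝ), ENNReal.ofReal (m z * ∫ t in (0:ℝ)..z, s t) := by
      have hz0 : ∀ z, M z * (∫⁻ y in Iio z, g y)
          = (Ioi (0:ℝ)).indicator
            (fun z => ENNReal.ofReal (m z * ∫ t in (0:ℝ)..z, s t)) z := by
        intro z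
        have hind : (∫⁻ y in Iio z, g y) = ∫⁻ y in Ioi 0 ∩ Iio z, S y := by
          rw [hg, setLIntegral_indicator measurableSet_Ioi]
        by_cases h : z ∈ Ioi (0:ℝ)
        · have hzpos : (0:ℝ) < z := h
          rw [indicator_of_mem h, hind, Ioi_inter_Iio,
            setLIntegral_congr (Ioo_ae_eq_Ioc),
            ← ofReal_integral_eq_lintegral_ofReal (hsc.integrableOn_Ioc)
              (Filter.Eventually.of_forall fun t => (hspos t).le),
            ← intervalIntegral.integral_of_le hzpos.le,
            ← ENNReal.ofReal_mul (hmpos z).le]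
        · have hzle : z ≤ 0 := not_lt.mp h
          have : Ioi (0:ℝ) ∩ Iio z = ∅ := by
            apply eq_empty_of_forall_notMem
            intro x hx
            exact absurd (lt_trans hx.1 hx.2) (not_lt.mpr hzle)
          rw [indicator_of_notMem h, hind, this]
          simp
      simp only [hz0]
      rw [lintegral_indicator measurableSet_Ioi]
    rw [step1, step2, step3]
    exact hentp.lintegral_lt_top
  -- integrability of s·G on left half-line (uses hentm)
  have hSG0 : IntegrableOn (fun z => s z * G z) (Iio 0) := by
    set g : ℝ → ENNReal := (Iio (0:ℝ)).indicator S with hg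
    have hgm : Measurable g := hSm.indicator measurableSet_Iio
    refine ⟨((hsc.mul hGc).aestronglyMeasurable).restrict, ?_⟩
    rw [hasFiniteIntegral_iff_ofReal (Filter.Eventually.of_forall
      fun z => mul_nonneg (hspos z).le (hGnn z))]
    have step1 : (∫⁻ z in Iio (0:ℝ), ENNReal.ofReal (s z * G z))
        = ∫⁻ z, g z * ∫⁻ y in Iio z, M y := by
      rw [← lintegral_indicator measurableSet_Iio]
      refine lintegral_congr fun z => ?_
      by_cases h : z ∈ Iio (0:ℝ)
      · rw [indicator_of_mem h, hg, indicator_of_mem h,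
          ENNReal.ofReal_mul (hspos z).le]
        exact congrArg (fun t => S z * t) (hGe z)
      · rw [indicator_of_notMem h, hg, indicator_of_notMem h, zero_mul]
    have step2 := (lint_swap M g hMm hgm).symm
    have step3 : (∫⁻ y, M y * ∫⁻ z in Ioi y, g z)
        = ∫⁻ y in Iio (0:ℝ), ENNReal.ofReal (m y * ∫ t in y..(0:ℝ), s t) := by
      have hz0 : ∀ y, M y * (∫⁻ z in Ioi y, g z)
          = (Iio (0:ℝ)).indicator
            (fun y => ENNReal.ofReal (m y * ∫ t in y..(0:ℝ), s t)) y := by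
        intro y
        have hind : (∫⁻ z in Ioi y, g z) = ∫⁻ z in Iio 0 ∩ Ioi y, S z := by
          rw [hg, setLIntegral_indicator measurableSet_Iio]
        by_cases h : y ∈ Iio (0:ℝ)
        · have hyneg : y < 0 := h
          rw [indicator_of_mem h, hind, inter_comm, Ioi_inter_Iio,
            setLIntegral_congr (Ioo_ae_eq_Ioc),
            ← ofReal_integral_eq_lintegral_ofReal (hsc.integrableOn_Ioc)
              (Filter.Eventually.of_forall fun t => (hspos t).le),
            ← intervalIntegral.integral_of_le hyneg.le,
            ← ENNReal.ofReal_mul (hmpos y).le]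
        · have hyle : (0:ℝ) ≤ y := not_lt.mp h
          have : Iio (0:ℝ) ∩ Ioi y = ∅ := by
            apply eq_empty_of_forall_notMem
            intro x hx
            exact absurd hx.1 (not_lt.mpr (hyle.trans hx.2.le))
          rw [indicator_of_notMem h, hind, this]
          simp
      simp only [hz0]
      rw [lintegral_indicator measurableSet_Iio]
    rw [step1, step2, step3]
    exact hentm.lintegral_lt_top
  -- integrability on all half-lines
  have hSF : ∀ y, IntegrableOn (fun z => s z * F z) (Ioi y) := by
    intro y
    rcases le_or_gt 0 y with h | h
    · exact hSF0.mono_set (Ioi_subset_Ioi h)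
    · rw [← Ioc_union_Ioi_eq_Ioi h.le]
      exact ((hsc.mul hFc).integrableOn_Ioc).union hSF0
  have hSG : ∀ y, IntegrableOn (fun z => s z * G z) (Iio y) := by
    intro y
    rcases le_or_gt y 0 with h | h
    · exact hSG0.mono_set (Iio_subset_Iio h)
    · rw [← Iio_union_Ico_eq_Iio h.le]
      exact hSG0.union
        ((hsc.mul hGc).integrableOn_Icc.mono_set Ico_subset_Icc_self)
  -- measurability of the inner integrals
  have hΦm : Measurable fun y => ∫ z in Ioi y, s z * F z := by
    have hrep : ∀ y, (∫ z in Ioi y, s z * F z)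
        = (∫⁻ z in Ioi y, ENNReal.ofReal (s z * F z)).toReal := fun y =>
      integral_eq_lintegral_of_nonneg_ae
        (Filter.Eventually.of_forall fun z => mul_nonneg (hspos z).le (hFnn z))
        ((hsc.mul hFc).aestronglyMeasurable.restrict)
    rw [funext hrep]
    exact Measurable.ennreal_toReal <| Antitone.measurable fun y1 y2 h =>
      lintegral_mono_set (Ioi_subset_Ioi h)
  have hΨm : Measurable fun y => ∫ z in Iio y, s z * G z := by
    have hrep : ∀ y, (∫ z in Iio y, s z * G z)
        = (∫⁻ z in Iio y, ENNReal.ofReal (s z * G z)).toReal := fun y =>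
      integral_eq_lintegral_of_nonneg_ae
        (Filter.Eventually.of_forall fun z => mul_nonneg (hspos z).le (hGnn z))
        ((hsc.mul hGc).aestronglyMeasurable.restrict)
    rw [funext hrep]
    exact Measurable.ennreal_toReal <| Monotone.measurable fun y1 y2 h =>
      lintegral_mono_set (Iio_subset_Iio h)
  have hΦnn : ∀ y, 0 ≤ ∫ z in Ioi y, s z * F z := fun y =>
    setIntegral_nonneg measurableSet_Ioi fun z _ => mul_nonneg (hspos z).le (hFnn z)
  have hΨnn : ∀ y, 0 ≤ ∫ z in Iio y, s z * G z := fun y =>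
    setIntegral_nonneg measurableSet_Iio fun z _ => mul_nonneg (hspos z).le (hGnn z)
  -- the central identity
  have key : (∫ y, m y * ∫ z in Ioi y, s z * F z)
      = ∫ y, m y * ∫ z in Iio y, s z * G z := by
    have kL : (∫ y, m y * ∫ z in Ioi y, s z * F z)
        = (∫⁻ z, S z * Fe z * Ge z).toReal := by
      rw [integral_eq_lintegral_of_nonneg_ae
        (Filter.Eventually.of_forall fun y => mul_nonneg (hmpos y).le (hΦnn y))
        ((hmc.measurable.mul hΦm).aestronglyMeasurable)]
      congr 1
      calc ∫⁻ y, ENNReal.ofReal (m y * ∫ z in Ioi y, s z * F z)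
          = ∫⁻ y, M y * ∫⁻ z in Ioi y, S z * Fe z := by
            refine lintegral_congr fun y => ?_
            rw [ENNReal.ofReal_mul (hmpos y).le,
              ofReal_integral_eq_lintegral_ofReal (hSF y)
                (Filter.Eventually.of_forall fun z =>
                  mul_nonneg (hspos z).le (hFnn z))]
            congr 1
            exact lintegral_congr fun z => ENNReal.ofReal_mul (hspos z).le
        _ = ∫⁻ z, (S z * Fe z) * ∫⁻ y in Iio z, M y :=
            lint_swap M (fun z => S z * Fe z) hMm (hSm.mul hFem)
        _ = ∫⁻ z, S z * Fe z * Ge z := lintegral_congr fun z => by rw [hGe]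
    have kR : (∫ y, m y * ∫ z in Iio y, s z * G z)
        = (∫⁻ z, S z * Ge z * Fe z).toReal := by
      rw [integral_eq_lintegral_of_nonneg_ae
        (Filter.Eventually.of_forall fun y => mul_nonneg (hmpos y).le (hΨnn y))
        ((hmc.measurable.mul hΨm).aestronglyMeasurable)]
      congr 1
      calc ∫⁻ y, ENNReal.ofReal (m y * ∫ z in Iio y, s z * G z)
          = ∫⁻ y, M y * ∫⁻ z in Iio y, S z * Ge z := by
            refine lintegral_congr fun y => ?_
            rw [ENNReal.ofReal_mul (hmpos y).le,
              ofReal_integral_eq_lintegral_ofReal (hSG y)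
                (Filter.Eventually.of_forall fun z =>
                  mul_nonneg (hspos z).le (hGnn z))]
            congr 1
            exact lintegral_congr fun z => ENNReal.ofReal_mul (hspos z).le
        _ = ∫⁻ z, (S z * Ge z) * ∫⁻ y in Ioi z, M y :=
            (lint_swap (fun z => S z * Ge z) M (hSm.mul hGem) hMm).symm
        _ = ∫⁻ z, S z * Ge z * Fe z := lintegral_congr fun z => by rw [hFe]
    rw [kL, kR]
    congr 1
    exact lintegral_congr fun z => mul_right_comm _ _ _
  -- reduce the original statement to `key`
  have hinner1 : ∀ z, (∫ w in Ioi z, μ w) / (μ z * a z) = s z * F z := by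
    intro z
    have h1 : (∫ w in Ioi z, μ w) = F z / c := by
      simp only [hμ]
      exact integral_div c fun w => m w
    have hma : m z * a z = Real.exp (2 * B z) := by
      have haz := (hapos z).ne'
      rw [hm]; field_simp
    rw [h1, hμ z, hs z, Real.exp_neg, ← hma]
    have hmz := (hmpos z).ne'
    have haz := (hapos z).ne'
    have hcz := hcpos.ne'
    field_simp
  have hinner2 : ∀ z, (∫ w in Iic z, μ w) / (μ z * a z) = s z * G z := by
    intro z
    have h1 : (∫ w in Iic z, μ w) = G z / c := by
      simp only [hμ]
      exact integral_div c fun w => m w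
    have hma : m z * a z = Real.exp (2 * B z) := by
      have haz := (hapos z).ne'
      rw [hm]; field_simp
    rw [h1, hμ z, hs z, Real.exp_neg, ← hma]
    have hmz := (hmpos z).ne'
    have haz := (hapos z).ne'
    have hcz := hcpos.ne'
    field_simp
  have hLout : ∀ y, μ y * (∫ z in Ioi y, (∫ w in Ioi z, μ w) / (μ z * a z))
      = (m y * ∫ z in Ioi y, s z * F z) / c := by
    intro y
    rw [hμ y]
    simp only [hinner1]
    rw [div_mul_eq_mul_div]
  have hRout : ∀ y, μ y * (∫ z in Iio y, (∫ w in Iic z, μ w) / (μ z * a z))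
      = (m y * ∫ z in Iio y, s z * G z) / c := by
    intro y
    rw [hμ y]
    simp only [hinner2]
    rw [div_mul_eq_mul_div]
  simp only [hLout, hRout]
  rw [integral_div, integral_div, key]
end
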